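/- Let A = K[x,y]/I with I = (x^k y^m : m > a or k + m > a + b) the monomial algebra A_{a,b} for the Hirzebruch surface Σ_1, and let δ_1 = ∂_x + x∂_y, δ_2 = ∂_y act on A. Then δ_2^{a+1} = 0, and δ_1^{l_1} δ_2^{l_2} = 0 whenever l_1 + 2 l_2 > a + b. -/

import Mathlib

/-!
Give the surviving monomial `x^k y^m` (`m ≤ a`, `k + m ≤ b`) the weight `m`, resp. `k + 2m`.
Then `δ₂ = ∂_y` lowers the first weight by `1` and the second by `2`, while both terms of
`δ₁ x^k y^m = k x^(k-1) y^m + m x^(k+1) y^(m-1)` have second weight one less than `x^k y^m`.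
All weights are `≤ a`, resp. `≤ a + b`, so `δ₂^(a+1)` and `δ₁^l₁ δ₂^l₂` with
`l₁ + 2 l₂ > a + b` push every element into the span of monomials of negative weight,
i.e. to `0`.
-/

open MvPolynomial

theorem Module.End.pow_apply_mem_sub_mul {R M : Type*} [Semiring R] [AddCommMonoid M]
    [Module R M] {F : ℕ → Submodule R M} {D : Module.End R M} {d : ℕ}
    (hD : ∀ w, ∀ x ∈ F w, D x ∈ F (w - d)) (l : ℕ) {w : ℕ} {x : M} (hx : x ∈ F w) :
    (D ^ l) x ∈ F (w - d * l) := by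
  induction l generalizing w x with
  | zero => simpa using hx
  | succ l ih =>
    rw [pow_succ, Module.End.mul_apply, Nat.mul_succ, Nat.add_comm, ← Nat.sub_sub]
    exact ih (hD w x hx)

section Monomials

variable {R : Type*} [CommSemiring R]

theorem pderiv_zero_X_pow_mul_X_pow (k m : ℕ) :
    pderiv 0 (X 0 ^ k * X 1 ^ m : MvPolynomial (Fin 2) R) = k • (X 0 ^ (k - 1) * X 1 ^ m) := by
  simp
  ring

theorem pderiv_one_X_pow_mul_X_pow (k m : ℕ) :
    pderiv 1 (X 0 ^ k * X 1 ^ m : MvPolynomial (Fin 2) R) = m • (X 0 ^ k * X 1 ^ (m - 1)) := by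
  simp [mul_left_comm]

theorem monomial_one_fin_two (u : Fin 2 →₀ ℕ) :
    (monomial u 1 : MvPolynomial (Fin 2) R) = X 0 ^ u 0 * X 1 ^ u 1 := by
  rw [monomial_eq, Finsupp.prod_fintype _ _ fun _ => pow_zero _, Fin.prod_univ_two, C_1, one_mul]

end Monomials

section WeightSpan

variable {R : Type*} [CommRing R] {I : Ideal (MvPolynomial (Fin 2) R)} {a b : ℕ}

variable (I a b) in
noncomputable def weightSpan (c₁ c₂ w : ℕ) : Submodule R (MvPolynomial (Fin 2) R ⧸ I) :=
  Submodule.span R {v | ∃ k m, m ≤ a ∧ k + m ≤ b ∧ c₁ * k + c₂ * m < w ∧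
    v = Ideal.Quotient.mk I (X 0 ^ k * X 1 ^ m)}

theorem mk_mem_weightSpan {c₁ c₂ w k m : ℕ} (hm : m ≤ a) (hkm : k + m ≤ b)
    (hw : c₁ * k + c₂ * m < w) :
    Ideal.Quotient.mk I (X 0 ^ k * X 1 ^ m) ∈ weightSpan I a b c₁ c₂ w :=
  Submodule.subset_span ⟨k, m, hm, hkm, hw, rfl⟩

variable (I a b) in
theorem weightSpan_zero (c₁ c₂ : ℕ) : weightSpan I a b c₁ c₂ 0 = ⊥ := by
  rw [eq_bot_iff, weightSpan, Submodule.span_le]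
  rintro v ⟨k, m, -, -, h, -⟩
  exact absurd h (Nat.not_lt_zero _)

theorem weightSpan_eq_top {c₁ c₂ w : ℕ}
    (hI : ∀ k m, a < m ∨ b < k + m → X 0 ^ k * X 1 ^ m ∈ I)
    (hw : ∀ k m, m ≤ a → k + m ≤ b → c₁ * k + c₂ * m < w) :
    weightSpan I a b c₁ c₂ w = ⊤ := by
  rw [eq_top_iff]
  rintro q -
  obtain ⟨p, rfl⟩ := Ideal.Quotient.mk_surjective q
  induction p using MvPolynomial.induction_on' with
  | add p q hp hq => rw [map_add]; exact add_mem hp hq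
  | monomial u c =>
    have hmk : Ideal.Quotient.mk I (monomial u c) =
        c • Ideal.Quotient.mk I (X 0 ^ u 0 * X 1 ^ u 1) := by
      rw [← monomial_one_fin_two, ← Ideal.Quotient.mkₐ_eq_mk R, ← map_smul, smul_monomial,
        smul_eq_mul, mul_one]
    rw [hmk]
    by_cases hgood : u 1 ≤ a ∧ u 0 + u 1 ≤ b
    · exact Submodule.smul_mem _ c (mk_mem_weightSpan hgood.1 hgood.2 (hw _ _ hgood.1 hgood.2))
    · rw [Ideal.Quotient.eq_zero_iff_mem.mpr (hI _ _ (by omega)), smul_zero]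
      exact zero_mem _

theorem apply_mem_weightSpan {D : Module.End R (MvPolynomial (Fin 2) R ⧸ I)} {c₁ c₂ w d : ℕ}
    (hD : ∀ k m, m ≤ a → k + m ≤ b → c₁ * k + c₂ * m < w →
      D (Ideal.Quotient.mk I (X 0 ^ k * X 1 ^ m)) ∈ weightSpan I a b c₁ c₂ (w - d))
    {x : MvPolynomial (Fin 2) R ⧸ I} (hx : x ∈ weightSpan I a b c₁ c₂ w) :
    D x ∈ weightSpan I a b c₁ c₂ (w - d) := by
  have : weightSpan I a b c₁ c₂ w ≤ (weightSpan I a b c₁ c₂ (w - d)).comap D :=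
    Submodule.span_le.mpr (by rintro _ ⟨k, m, hm, hkm, hw, rfl⟩; exact hD k m hm hkm hw)
  exact this hx

theorem apply_mem_weightSpan_sub_of_pderiv_one {D : Module.End R (MvPolynomial (Fin 2) R ⧸ I)}
    (hD : ∀ k m, m ≤ a → k + m ≤ b → D (Ideal.Quotient.mk I (X 0 ^ k * X 1 ^ m)) =
      Ideal.Quotient.mk I (pderiv 1 (X 0 ^ k * X 1 ^ m)))
    (c₁ c₂ w : ℕ) :
    ∀ x ∈ weightSpan I a b c₁ c₂ w, D x ∈ weightSpan I a b c₁ c₂ (w - c₂) := by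
  refine fun x hx => apply_mem_weightSpan (fun k m hm hkm hw => ?_) hx
  rw [hD k m hm hkm, pderiv_one_X_pow_mul_X_pow, map_nsmul]
  cases m with
  | zero => simp
  | succ m =>
    rw [Nat.mul_succ] at hw
    rw [Nat.add_sub_cancel]
    exact nsmul_mem (mk_mem_weightSpan (by omega) (by omega) (by omega)) _

theorem apply_mem_weightSpan_pred_of_pderiv_zero_add_X_mul_pderiv_one
    {D : Module.End R (MvPolynomial (Fin 2) R ⧸ I)}
    (hD : ∀ k m, m ≤ a → k + m ≤ b → D (Ideal.Quotient.mk I (X 0 ^ k * X 1 ^ m)) =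
      Ideal.Quotient.mk I (pderiv 0 (X 0 ^ k * X 1 ^ m) + X 0 * pderiv 1 (X 0 ^ k * X 1 ^ m)))
    (w : ℕ) : ∀ x ∈ weightSpan I a b 1 2 w, D x ∈ weightSpan I a b 1 2 (w - 1) := by
  refine fun x hx => apply_mem_weightSpan (fun k m hm hkm hw => ?_) hx
  rw [hD k m hm hkm, pderiv_zero_X_pow_mul_X_pow, pderiv_one_X_pow_mul_X_pow, mul_smul_comm,
    ← mul_assoc, ← pow_succ', map_add, map_nsmul, map_nsmul]
  refine add_mem ?_ ?_
  · cases k with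
    | zero => simp
    | succ k => exact nsmul_mem (mk_mem_weightSpan (by omega) (by omega) (by omega)) _
  · cases m with
    | zero => simp
    | succ m => exact nsmul_mem (mk_mem_weightSpan (by omega) (by omega) (by omega)) _

end WeightSpan

theorem stmt_10_general (K : Type*) [Field K] (a b : ℕ)
    (I : Ideal (MvPolynomial (Fin 2) K))
    (hI : I = Ideal.span {p | ∃ k m : ℕ, (a < m ∨ b < k + m) ∧ p = X 0 ^ k * X 1 ^ m})
    (D1 D2 : Module.End K (MvPolynomial (Fin 2) K ⧸ I))
    (hD1 : ∀ k m : ℕ, m ≤ a → k + m ≤ b →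
      D1 (Ideal.Quotient.mk I (X 0 ^ k * X 1 ^ m)) =
        Ideal.Quotient.mk I (pderiv 0 (X 0 ^ k * X 1 ^ m) + X 0 * pderiv 1 (X 0 ^ k * X 1 ^ m)))
    (hD2 : ∀ k m : ℕ, m ≤ a → k + m ≤ b →
      D2 (Ideal.Quotient.mk I (X 0 ^ k * X 1 ^ m)) =
        Ideal.Quotient.mk I (pderiv 1 (X 0 ^ k * X 1 ^ m))) :
    D2 ^ (a + 1) = 0 ∧ ∀ l1 l2 : ℕ, a + b < l1 + 2 * l2 → D1 ^ l1 * D2 ^ l2 = 0 := by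
  have hbad : ∀ k m, a < m ∨ b < k + m → X 0 ^ k * X 1 ^ m ∈ I :=
    fun k m h => hI ▸ Ideal.subset_span ⟨k, m, h, rfl⟩
  refine ⟨LinearMap.ext fun q => ?_, fun l1 l2 hl => LinearMap.ext fun q => ?_⟩
  · have hq : q ∈ weightSpan I a b 0 1 (a + 1) := by
      rw [weightSpan_eq_top hbad fun k m hm _ => by omega]; trivial
    have h := Module.End.pow_apply_mem_sub_mul
      (apply_mem_weightSpan_sub_of_pderiv_one hD2 0 1) (a + 1) hq
    rw [show a + 1 - 1 * (a + 1) = 0 by omega, weightSpan_zero] at h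
    simpa using h
  · have hq : q ∈ weightSpan I a b 1 2 (a + b + 1) := by
      rw [weightSpan_eq_top hbad fun k m hm hkm => by omega]; trivial
    have h2 := Module.End.pow_apply_mem_sub_mul
      (apply_mem_weightSpan_sub_of_pderiv_one hD2 1 2) l2 hq
    have h1 := Module.End.pow_apply_mem_sub_mul
      (apply_mem_weightSpan_pred_of_pderiv_zero_add_X_mul_pderiv_one hD1) l1 h2
    rw [show a + b + 1 - 2 * l2 - 1 * l1 = 0 by omega, weightSpan_zero] at h1
    simpa using h1

/-- On `A_{a,b} = K[x,y]/(x^k y^m : m > a ∨ k + m > b)`, the operators `δ_1 = ∂_x + x∂_y` and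
`δ_2 = ∂_y` (defined on the monomial basis) satisfy `δ_2^{a+1} = 0` and
`δ_1^{l_1} δ_2^{l_2} = 0` whenever `l_1 + 2l_2 > a + b`. -/
theorem stmt_10 (K : Type*) [Field K] [CharZero K] (a b : ℕ) (ha : 1 ≤ a) (hb : a < b)
    (I : Ideal (MvPolynomial (Fin 2) K))
    (hI : I = Ideal.span {p | ∃ k m : ℕ, (a < m ∨ b < k + m) ∧ p = X 0 ^ k * X 1 ^ m})
    (D1 D2 : Module.End K (MvPolynomial (Fin 2) K ⧸ I))
    (hD1 : ∀ k m : ℕ, m ≤ a → k + m ≤ b →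
      D1 (Ideal.Quotient.mk I (X 0 ^ k * X 1 ^ m)) =
        Ideal.Quotient.mk I (pderiv 0 (X 0 ^ k * X 1 ^ m) + X 0 * pderiv 1 (X 0 ^ k * X 1 ^ m)))
    (hD2 : ∀ k m : ℕ, m ≤ a → k + m ≤ b →
      D2 (Ideal.Quotient.mk I (X 0 ^ k * X 1 ^ m)) =
        Ideal.Quotient.mk I (pderiv 1 (X 0 ^ k * X 1 ^ m))) :
    D2 ^ (a + 1) = 0 ∧ ∀ l1 l2 : ℕ, a + b < l1 + 2 * l2 → D1 ^ l1 * D2 ^ l2 = 0 :=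
  stmt_10_general K a b I hI D1 D2 hD1 hD2
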